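/- Let Ψ : ℝ^d → ℝ be convex with invertible gradient map, and for t ∈ [0,1) let φ_t = (1−t)·Id + t·∇Ψ. Define u_t(x) = ∇Ψ(z) − z where z = φ_t^{-1}(x). Then for any x₀, x₁ ∈ ℝ^d, with x_t = (1−t)x₀ + t x₁: ∫₀¹ ‖u_t(x_t) − (x₁ − x₀)‖² dt = 2[Ψ(x₀) + Ψ̄(x₁) − ⟨x₀,x₁⟩]. -/

import Mathlib

/-!
For `t ∈ (0, 1)` the point `ζ t` minimises `z ↦ Ψ z - ⟪x₁, z⟫ + (1/t - 1)/2 · ‖x₀ - z‖²`: the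
first-order condition of this convex function is exactly `(1 - t) z + t ∇Ψ(z) = x_t`. The minimum
value `H t` is a lower envelope of functions affine in `1/t`, so comparing `H s` and `H t` with the
objectives at the two minimisers squeezes `H s - H t` between `(1/s - 1/t)/2 · ‖x₀ - ζ s‖²` and
`(1/s - 1/t)/2 · ‖x₀ - ζ t‖²`. Since `ζ` is continuous (`(1 - t) Id + t ∇Ψ` is
`(1 - t)`-strongly monotone), `H' t = -‖x₀ - ζ t‖² / (2t²) = -½ ‖u_t(x_t) - (x₁ - x₀)‖²`.
Finally `H → Ψ x₀ - ⟪x₁, x₀⟫` as `t → 0` and `H → -Ψ̄ x₁` as `t → 1`, and the fundamental theorem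
of calculus applies; the integrand has a sign, so it is automatically integrable.
-/

open scoped RealInnerProductSpace

open Filter Topology Set

theorem hasDerivAt_of_sub_sandwich {f g a : ℝ → ℝ} {t g' : ℝ} (hg : HasDerivAt g g' t)
    (ha : ContinuousAt a t) (hlo : ∀ᶠ s in 𝓝 t, (g s - g t) * a s ≤ f s - f t)
    (hhi : ∀ᶠ s in 𝓝 t, f s - f t ≤ (g s - g t) * a t) :
    HasDerivAt f (g' * a t) t := by
  have hprod : (fun s => (g s - g t) * (a s - a t)) =o[𝓝 t] fun s => s - t := by
    have ha' : (fun s => a s - a t) =o[𝓝 t] fun _ => (1 : ℝ) :=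
      (Asymptotics.isLittleO_one_iff ℝ).2 (tendsto_sub_nhds_zero_iff.2 ha)
    simpa using hg.isBigO_sub.mul_isLittleO ha'
  have hgap : (fun s => f s - f t - (g s - g t) * a t) =o[𝓝 t] fun s => s - t := by
    refine (Asymptotics.IsBigO.of_bound 1 ?_).trans_isLittleO hprod
    filter_upwards [hlo, hhi] with s hslo hshi
    rw [one_mul, Real.norm_eq_abs, Real.norm_eq_abs, abs_le]
    constructor <;> linarith [le_abs_self ((g s - g t) * (a s - a t)),
      neg_abs_le ((g s - g t) * (a s - a t))]
  rw [hasDerivAt_iff_isLittleO]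
  refine (hgap.add ((hasDerivAt_iff_isLittleO.1 hg).const_mul_left (a t))).congr_left fun s => ?_
  simp only [smul_eq_mul]
  ring

theorem intervalIntegrable_deriv_of_nonneg_of_tendsto {f f' : ℝ → ℝ} {a b fa fb : ℝ}
    (hab : a < b) (hderiv : ∀ x ∈ Ioo a b, HasDerivAt f (f' x) x)
    (hpos : ∀ x ∈ Ioo a b, 0 ≤ f' x) (ha : Tendsto f (𝓝[>] a) (𝓝 fa))
    (hb : Tendsto f (𝓝[<] b) (𝓝 fb)) :
    IntervalIntegrable f' MeasureTheory.volume a b := by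
  set F : ℝ → ℝ := Function.update (Function.update f a fa) b fb
  have hFf : EqOn F f (Ioo a b) := fun x hx => by simp [F, hx.1.ne', hx.2.ne]
  have hFderiv : ∀ x ∈ Ioo a b, HasDerivAt F (f' x) x := fun x hx =>
    (hderiv x hx).congr_of_eventuallyEq (eventuallyEq_of_mem (Ioo_mem_nhds hx.1 hx.2) hFf)
  have hFcont : ContinuousOn F (Icc a b) := by
    rw [continuousOn_update_iff, continuousOn_update_iff, Icc_sdiff_right, Ico_sdiff_left]
    refine ⟨⟨fun x hx => (hderiv x hx).continuousAt.continuousWithinAt,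
      fun _ => ha.mono_left (nhdsWithin_mono _ Ioo_subset_Ioi_self)⟩, fun _ => ?_⟩
    refine (hb.congr' ?_).mono_left (nhdsWithin_mono _ Ico_subset_Iio_self)
    exact eventuallyEq_of_mem (Ioo_mem_nhdsLT hab) fun x hx =>
      (Function.update_of_ne hx.1.ne' _ _).symm
  have hIoo : Ioo (min a b) (max a b) = Ioo a b := by rw [min_eq_left hab.le, max_eq_right hab.le]
  exact intervalIntegral.intervalIntegrable_deriv_of_nonneg
    (by rwa [uIcc_of_le hab.le]) (hIoo ▸ hFderiv) (hIoo ▸ hpos)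

section

variable {E : Type*} [NormedAddCommGroup E] [InnerProductSpace ℝ E]
  {Ψ : E → ℝ} {G : E → E} {x0 x1 : E} {ζ : ℝ → E}

theorem ConvexOn.add_inner_sub_le_of_hasGradientAt [CompleteSpace E] {g z : E}
    (hΨ : ConvexOn ℝ univ Ψ) (h : HasGradientAt Ψ g z) (y : E) : Ψ z + ⟪g, y - z⟫ ≤ Ψ y := by
  let ℓ : ℝ →ᵃ[ℝ] E := AffineMap.lineMap z y
  have hℓ : HasDerivAt (Ψ ∘ ℓ) ⟪g, y - z⟫ 0 := by
    have h' : HasFDerivAt Ψ (InnerProductSpace.toDual ℝ E g) (ℓ 0) := by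
      simpa [ℓ] using h.hasFDerivAt
    simpa using h'.comp_hasDerivAt (0 : ℝ) AffineMap.hasDerivAt_lineMap
  have hslope := (hΨ.comp_affineMap ℓ).le_slope_of_hasDerivAt (mem_univ 0) (mem_univ 1)
    zero_lt_one hℓ
  simp only [slope_def_field, Function.comp_apply, ℓ, AffineMap.lineMap_apply_one,
    AffineMap.lineMap_apply_zero, sub_zero, div_one] at hslope
  linarith

theorem ConvexOn.inner_sub_nonneg_of_hasGradientAt [CompleteSpace E] {x y gx gy : E}
    (hΨ : ConvexOn ℝ univ Ψ) (hx : HasGradientAt Ψ gx x) (hy : HasGradientAt Ψ gy y) :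
    0 ≤ ⟪gx - gy, x - y⟫ := by
  have hxy := hΨ.add_inner_sub_le_of_hasGradientAt hx y
  have hyx := hΨ.add_inner_sub_le_of_hasGradientAt hy x
  rw [← neg_sub x y, inner_neg_right] at hxy
  rw [inner_sub_left]
  linarith

theorem one_sub_mul_norm_sub_le (hG : ∀ a b, 0 ≤ ⟪G a - G b, a - b⟫) {s : ℝ} (hs : 0 ≤ s)
    (a b : E) : (1 - s) * ‖a - b‖ ≤ ‖((1 - s) • a + s • G a) - ((1 - s) • b + s • G b)‖ := by
  have key : (1 - s) * ‖a - b‖ ^ 2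
      ≤ ‖((1 - s) • a + s • G a) - ((1 - s) • b + s • G b)‖ * ‖a - b‖ :=
    calc (1 - s) * ‖a - b‖ ^ 2 ≤ (1 - s) * ‖a - b‖ ^ 2 + s * ⟪G a - G b, a - b⟫ :=
          le_add_of_nonneg_right (mul_nonneg hs (hG a b))
      _ = ⟪(1 - s) • (a - b) + s • (G a - G b), a - b⟫ := by
          rw [inner_add_left, real_inner_smul_left, real_inner_smul_left,
            real_inner_self_eq_norm_sq]
      _ = ⟪((1 - s) • a + s • G a) - ((1 - s) • b + s • G b), a - b⟫ := by
          congr 1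
          module
      _ ≤ _ := real_inner_le_norm _ _
  rcases (norm_nonneg (a - b)).eq_or_lt with h | h
  · rw [← h, mul_zero]
    exact norm_nonneg _
  · nlinarith

variable (G x0 x1 ζ) in
def IsPreimagePath : Prop :=
  ∀ t ∈ Ico (0 : ℝ) 1, (1 - t) • ζ t + t • G (ζ t) = (1 - t) • x0 + t • x1

theorem IsPreimagePath.one_sub_mul_norm_sub_le (hζ : IsPreimagePath G x0 x1 ζ)
    (hG : ∀ a b, 0 ≤ ⟪G a - G b, a - b⟫) {s t : ℝ} (hs : s ∈ Ico (0 : ℝ) 1)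
    (ht : t ∈ Ico (0 : ℝ) 1) :
    (1 - s) * ‖ζ s - ζ t‖ ≤ |s - t| * ‖G (ζ t) - ζ t - (x1 - x0)‖ := by
  have hφ : (1 - s) • ζ s + s • G (ζ s) - ((1 - s) • ζ t + s • G (ζ t))
      = (t - s) • (G (ζ t) - ζ t - (x1 - x0)) := by
    linear_combination (norm := module) hζ s hs - hζ t ht
  simpa only [hφ, norm_smul, Real.norm_eq_abs, abs_sub_comm t s]
    using _root_.one_sub_mul_norm_sub_le hG hs.1 (ζ s) (ζ t)

theorem IsPreimagePath.continuousWithinAt (hζ : IsPreimagePath G x0 x1 ζ)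
    (hG : ∀ a b, 0 ≤ ⟪G a - G b, a - b⟫) {t : ℝ} (ht : t ∈ Ico (0 : ℝ) 1) :
    ContinuousWithinAt ζ (Ico 0 1) t := by
  rw [ContinuousWithinAt, tendsto_iff_norm_sub_tendsto_zero]
  set C := ‖G (ζ t) - ζ t - (x1 - x0)‖
  have hbound : Tendsto (fun s => |s - t| * C / (1 - s)) (𝓝[Ico 0 1] t) (𝓝 0) := by
    have hcont : ContinuousAt (fun s => |s - t| * C / (1 - s)) t :=
      ContinuousAt.div (by fun_prop) (by fun_prop) (by linarith [ht.2])
    simpa using hcont.tendsto.mono_left nhdsWithin_le_nhds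
  refine squeeze_zero' (Eventually.of_forall fun _ => norm_nonneg _) ?_ hbound
  filter_upwards [self_mem_nhdsWithin] with s hs
  rw [le_div_iff₀ (by linarith [hs.2]), mul_comm]
  exact hζ.one_sub_mul_norm_sub_le hG hs ht

variable (Ψ x0 x1) in
noncomputable def proxObjective (c : ℝ) (z : E) : ℝ :=
  Ψ z - ⟪x1, z⟫ + c / 2 * ‖x0 - z‖ ^ 2

theorem sub_inner_le_proxObjective {c : ℝ} (hc : 0 ≤ c) (z : E) :
    Ψ z - ⟪x1, z⟫ ≤ proxObjective Ψ x0 x1 c z :=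
  le_add_of_nonneg_right (by positivity)

theorem proxObjective_sub_proxObjective (c c' : ℝ) (z : E) :
    proxObjective Ψ x0 x1 c z - proxObjective Ψ x0 x1 c' z
      = (c / 2 - c' / 2) * ‖x0 - z‖ ^ 2 := by
  unfold proxObjective
  ring

theorem proxObjective_le_of_hasGradientAt [CompleteSpace E] (hΨ : ConvexOn ℝ univ Ψ) {c : ℝ}
    (hc : 0 ≤ c) {y : E} (hy : HasGradientAt Ψ (x1 + c • (x0 - y)) y) (z : E) :
    proxObjective Ψ x0 x1 c y ≤ proxObjective Ψ x0 x1 c z := by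
  have hfirst := hΨ.add_inner_sub_le_of_hasGradientAt hy z
  have hsq : ‖x0 - z‖ ^ 2 = ‖x0 - y‖ ^ 2 - 2 * ⟪x0 - y, z - y⟫ + ‖z - y‖ ^ 2 := by
    rw [← norm_sub_sq_real]
    congr 2
    abel
  rw [inner_add_left, real_inner_smul_left, inner_sub_right] at hfirst
  unfold proxObjective
  rw [hsq]
  nlinarith [mul_nonneg hc (sq_nonneg ‖z - y‖)]

theorem IsPreimagePath.proxObjective_le [CompleteSpace E] (hζ : IsPreimagePath G x0 x1 ζ)
    (hΨ : ConvexOn ℝ univ Ψ) (hgrad : ∀ x, HasGradientAt Ψ (G x) x) {t : ℝ}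
    (ht : t ∈ Ioo (0 : ℝ) 1) (z : E) :
    proxObjective Ψ x0 x1 (t⁻¹ - 1) (ζ t) ≤ proxObjective Ψ x0 x1 (t⁻¹ - 1) z := by
  have ht0 : t ≠ 0 := ht.1.ne'
  have hG : G (ζ t) = x1 + (t⁻¹ - 1) • (x0 - ζ t) := by
    linear_combination (norm := skip) t⁻¹ • hζ t ⟨ht.1.le, ht.2⟩
    match_scalars <;> field_simp <;> ring
  refine proxObjective_le_of_hasGradientAt hΨ ?_ (hG ▸ hgrad (ζ t)) z
  rw [sub_nonneg, one_le_inv₀ ht.1]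
  exact ht.2.le

theorem IsPreimagePath.hasDerivAt_proxObjective [CompleteSpace E]
    (hζ : IsPreimagePath G x0 x1 ζ) (hΨ : ConvexOn ℝ univ Ψ)
    (hgrad : ∀ x, HasGradientAt Ψ (G x) x) {t : ℝ} (ht : t ∈ Ioo (0 : ℝ) 1) :
    HasDerivAt (fun s => proxObjective Ψ x0 x1 (s⁻¹ - 1) (ζ s))
      (-(‖G (ζ t) - ζ t - (x1 - x0)‖ ^ 2 / 2)) t := by
  have hζt : ContinuousAt ζ t :=
    (hζ.continuousWithinAt (fun a b => hΨ.inner_sub_nonneg_of_hasGradientAt (hgrad a) (hgrad b))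
      ⟨ht.1.le, ht.2⟩).continuousAt (Ico_mem_nhds ht.1 ht.2)
  have hc : HasDerivAt (fun s : ℝ => (s⁻¹ - 1) / 2) (-(t ^ 2)⁻¹ / 2) t :=
    ((hasDerivAt_inv ht.1.ne').sub_const 1).div_const 2
  have hnear : ∀ᶠ s in 𝓝 t, s ∈ Ioo (0 : ℝ) 1 := Ioo_mem_nhds ht.1 ht.2
  have hderiv := hasDerivAt_of_sub_sandwich
    (f := fun s => proxObjective Ψ x0 x1 (s⁻¹ - 1) (ζ s)) (a := fun s => ‖x0 - ζ s‖ ^ 2)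
    hc (by fun_prop)
    (hnear.mono fun s _ => by
      linarith [hζ.proxObjective_le hΨ hgrad ht (ζ s),
        proxObjective_sub_proxObjective (Ψ := Ψ) (x0 := x0) (x1 := x1) (s⁻¹ - 1) (t⁻¹ - 1) (ζ s)])
    (hnear.mono fun s hs => by
      linarith [hζ.proxObjective_le hΨ hgrad hs (ζ t),
        proxObjective_sub_proxObjective (Ψ := Ψ) (x0 := x0) (x1 := x1) (s⁻¹ - 1) (t⁻¹ - 1) (ζ t)])
  have hx0 : x0 - ζ t = t • (G (ζ t) - ζ t - (x1 - x0)) := by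
    linear_combination (norm := module) -hζ t ⟨ht.1.le, ht.2⟩
  convert hderiv using 1
  rw [hx0, norm_smul, Real.norm_eq_abs, mul_pow, sq_abs]
  field_simp [ht.1.ne']

theorem IsPreimagePath.tendsto_proxObjective_zero [CompleteSpace E]
    (hζ : IsPreimagePath G x0 x1 ζ) (hΨ : ConvexOn ℝ univ Ψ)
    (hgrad : ∀ x, HasGradientAt Ψ (G x) x) :
    Tendsto (fun s => proxObjective Ψ x0 x1 (s⁻¹ - 1) (ζ s)) (𝓝[>] 0)
      (𝓝 (Ψ x0 - ⟪x1, x0⟫)) := by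
  have hζ0 : ζ 0 = x0 := by simpa using hζ 0 ⟨le_rfl, one_pos⟩
  have hζlim : Tendsto ζ (𝓝[>] 0) (𝓝 x0) := by
    have h := hζ.continuousWithinAt
      (fun a b => hΨ.inner_sub_nonneg_of_hasGradientAt (hgrad a) (hgrad b)) ⟨le_rfl, one_pos⟩
    rw [ContinuousWithinAt, hζ0] at h
    exact h.mono_left (nhdsWithin_le_of_mem (Ico_mem_nhdsGT one_pos))
  have hlower : Tendsto (fun s => Ψ (ζ s) - ⟪x1, ζ s⟫) (𝓝[>] 0) (𝓝 (Ψ x0 - ⟪x1, x0⟫)) :=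
    ((hgrad x0).continuousAt.tendsto.comp hζlim).sub (tendsto_const_nhds.inner hζlim)
  have hunit : ∀ᶠ s in 𝓝[>] (0 : ℝ), s ∈ Ioo (0 : ℝ) 1 := Ioo_mem_nhdsGT one_pos
  refine tendsto_of_tendsto_of_tendsto_of_le_of_le' hlower tendsto_const_nhds ?_ ?_
  · filter_upwards [hunit] with s hs
    exact sub_inner_le_proxObjective (sub_nonneg.2 ((one_le_inv₀ hs.1).2 hs.2.le)) _
  · filter_upwards [hunit] with s hs
    simpa [proxObjective] using hζ.proxObjective_le hΨ hgrad hs x0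

theorem IsPreimagePath.tendsto_proxObjective_one [CompleteSpace E]
    (hζ : IsPreimagePath G x0 x1 ζ) (hΨ : ConvexOn ℝ univ Ψ)
    (hgrad : ∀ x, HasGradientAt Ψ (G x) x) {conj : ℝ}
    (hconj : IsLUB (range fun z => ⟪x1, z⟫ - Ψ z) conj) :
    Tendsto (fun s => proxObjective Ψ x0 x1 (s⁻¹ - 1) (ζ s)) (𝓝[<] 1) (𝓝 (-conj)) := by
  have hunit : ∀ᶠ s in 𝓝[<] (1 : ℝ), s ∈ Ioo (0 : ℝ) 1 := Ioo_mem_nhdsLT one_pos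
  refine tendsto_order.2 ⟨fun b hb => ?_, fun b hb => ?_⟩
  · filter_upwards [hunit] with s hs
    linarith [hconj.1 ⟨ζ s, rfl⟩, sub_inner_le_proxObjective (Ψ := Ψ) (x0 := x0) (x1 := x1)
      (sub_nonneg.2 ((one_le_inv₀ hs.1).2 hs.2.le)) (ζ s)]
  · obtain ⟨_, ⟨z, rfl⟩, hz, -⟩ := hconj.exists_between (neg_lt.1 hb)
    have hcont : ContinuousAt (fun s => proxObjective Ψ x0 x1 (s⁻¹ - 1) z) 1 := by
      unfold proxObjective
      fun_prop (disch := norm_num)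
    have hlim : ∀ᶠ s in 𝓝[<] (1 : ℝ), proxObjective Ψ x0 x1 (s⁻¹ - 1) z < b :=
      (hcont.tendsto.mono_left nhdsWithin_le_nhds).eventually
        (gt_mem_nhds (by simpa [proxObjective] using (by linarith : Ψ z - ⟪x1, z⟫ < b)))
    filter_upwards [hunit, hlim] with s hs hsz
    exact (hζ.proxObjective_le hΨ hgrad hs z).trans_lt hsz

end

theorem ofm_identity_general
    (d : ℕ) (Ψ : EuclideanSpace ℝ (Fin d) → ℝ)
    (G : EuclideanSpace ℝ (Fin d) → EuclideanSpace ℝ (Fin d))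
    (hconv : ConvexOn ℝ Set.univ Ψ)
    (hgrad : ∀ x, HasGradientAt Ψ (G x) x)
    (x0 x1 : EuclideanSpace ℝ (Fin d))
    (conjx1 : ℝ)
    (hconj : IsLUB (Set.range fun z => ⟪x1, z⟫ - Ψ z) conjx1)
    (ζ : ℝ → EuclideanSpace ℝ (Fin d))
    (hζ : ∀ t ∈ Set.Ico (0 : ℝ) 1,
      (1 - t) • ζ t + t • G (ζ t) = (1 - t) • x0 + t • x1) :
    ∫ t in (0 : ℝ)..1, ‖(G (ζ t) - ζ t) - (x1 - x0)‖ ^ 2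
      = 2 * (Ψ x0 + conjx1 - ⟪x0, x1⟫) := by
  have hpath : IsPreimagePath G x0 x1 ζ := hζ
  set H : ℝ → ℝ := fun s => -2 * proxObjective Ψ x0 x1 (s⁻¹ - 1) (ζ s)
  have hderiv : ∀ t ∈ Ioo (0 : ℝ) 1, HasDerivAt H (‖G (ζ t) - ζ t - (x1 - x0)‖ ^ 2) t :=
    fun t ht => ((hpath.hasDerivAt_proxObjective hconv hgrad ht).const_mul (-2)).congr_deriv
      (by ring)
  have h0 := (hpath.tendsto_proxObjective_zero hconv hgrad).const_mul (-2)
  have h1 := (hpath.tendsto_proxObjective_one hconv hgrad hconj).const_mul (-2)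
  rw [intervalIntegral.integral_eq_sub_of_hasDerivAt_of_tendsto zero_lt_one hderiv
    (intervalIntegrable_deriv_of_nonneg_of_tendsto zero_lt_one hderiv (fun _ _ => sq_nonneg _)
      h0 h1) h0 h1, real_inner_comm]
  ring

/-- The central OFM identity: with `φ_t = (1−t)·Id + t·∇Ψ` invertible, `ζ t` the preimage
of `x_t = (1−t)x₀ + t x₁` under `φ_t`, and `u_t(x_t) = ∇Ψ(ζ t) − ζ t`, one has
`∫₀¹ ‖u_t(x_t) − (x₁ − x₀)‖² dt = 2[Ψ(x₀) + Ψ̄(x₁) − ⟨x₀,x₁⟩]`. -/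
theorem ofm_identity
    (d : ℕ) (Ψ : EuclideanSpace ℝ (Fin d) → ℝ)
    (G : EuclideanSpace ℝ (Fin d) → EuclideanSpace ℝ (Fin d))
    (hconv : ConvexOn ℝ Set.univ Ψ)
    (hgrad : ∀ x, HasGradientAt Ψ (G x) x)
    (hbij : Function.Bijective G)
    (hGinv : Continuous (Function.invFun G))
    (hφbij : ∀ t ∈ Set.Ico (0 : ℝ) 1,
      Function.Bijective (fun z : EuclideanSpace ℝ (Fin d) => (1 - t) • z + t • G z))
    (x0 x1 : EuclideanSpace ℝ (Fin d))
    (conjx1 : ℝ)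
    (hconj : IsLUB (Set.range fun z => ⟪x1, z⟫ - Ψ z) conjx1)
    (ζ : ℝ → EuclideanSpace ℝ (Fin d))
    (hζ : ∀ t ∈ Set.Ico (0 : ℝ) 1,
      (1 - t) • ζ t + t • G (ζ t) = (1 - t) • x0 + t • x1) :
    ∫ t in (0 : ℝ)..1, ‖(G (ζ t) - ζ t) - (x1 - x0)‖ ^ 2
      = 2 * (Ψ x0 + conjx1 - ⟪x0, x1⟫) :=
  ofm_identity_general d Ψ G hconv hgrad x0 x1 conjx1 hconj ζ hζ
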